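/- arXiv:1401.7777 — 6 statements merged into one kernel-verified Lean document; each statement's English description precedes it below -/
import Mathlib

section
/- Let A be a commutative ring, ς ∈ End(A) with ς ≠ id, and suppose there exists x ∈ A with x − ς(x) invertible in A. Let M be an A-module and σ : M → M additive with σ(a·m) = ς(a)·σ(m). Then any σ-twisted derivation Δ on M with restriction ∂_A to A satisfies Δ = (x − ς(x))^{-1}·∂_A(x)·(id − σ). -/
/-- If `x - ς x` is a unit and `Δ` is a `σ`-twisted derivation on `M` with
restriction `∂_A` to `A` (where `σ : M → M` is `ς`-semilinear, and the module `M` is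
regarded symmetrically, so the twisted Leibniz rule holds on both sides), then
`Δ = (x - ς x)⁻¹ • ∂_A(x) • (id - σ)`. -/
theorem twisted_derivation_eq_inner
    {A : Type*} [CommRing A] {M : Type*} [AddCommGroup M] [Module A M]
    (ς : A →+* A) (hς : ς ≠ RingHom.id A) (x : A) (hx : IsUnit (x - ς x))
    (σ : M →+ M) (hσ : ∀ (a : A) (m : M), σ (a • m) = ς a • σ m)
    (Δ : M →+ M) (dA : A → A)
    (hΔ : ∀ (a : A) (m : M), Δ (a • m) = dA a • m + ς a • Δ m)
    (hΔ' : ∀ (a : A) (m : M), Δ (a • m) = a • Δ m + dA a • σ m) :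
    ∀ m : M, Δ m = (Ring.inverse (x - ς x) * dA x) • (m - σ m) := by
  intro m
  have h : dA x • m + ς x • Δ m = x • Δ m + dA x • σ m :=
    (hΔ x m).symm.trans (hΔ' x m)
  have key : (x - ς x) • Δ m = dA x • (m - σ m) := by
    rw [sub_smul, smul_sub]
    rw [sub_eq_sub_iff_add_eq_add]
    exact h.symm
  calc Δ m = (Ring.inverse (x - ς x) * (x - ς x)) • Δ m := by
        rw [Ring.inverse_mul_cancel _ hx, one_smul]
    _ = Ring.inverse (x - ς x) • ((x - ς x) • Δ m) := by rw [mul_smul]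
    _ = (Ring.inverse (x - ς x) * dA x) • (m - σ m) := by rw [key, smul_smul]
end

section
/- Let A be a commutative k-algebra, σ ∈ End(A), and Δ_σ := id − σ. Then the bracket ⟨⟨a·Δ_σ, b·Δ_σ⟩⟩ := (σ(a)Δ_σ(b) − σ(b)Δ_σ(a))·Δ_σ on the free module A·e (identified with A) is bilinear, alternating (⟨⟨x,x⟩⟩ = 0), and satisfies the twisted Jacobi identity: the cyclic sum over (a,b,c) of ⟨⟨σ(a)+a, ⟨⟨b,c⟩⟩⟩⟩ vanishes. -/
/-- For a commutative `k`-algebra `A` and a `k`-algebra endomorphism `σ`,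
with `Δ_σ = id - σ`, the bracket `⟨⟨a,b⟩⟩ := σ(a)·Δ_σ(b) - σ(b)·Δ_σ(a)` on the free
rank-one module `A·Δ_σ` (identified with `A`, where the bracket reads
`⟨⟨a,b⟩⟩ = σ(a)b - σ(b)a`) is `k`-bilinear, alternating, and satisfies the twisted
Jacobi identity `Σ_cyc ⟨⟨σ(a)+a, ⟨⟨b,c⟩⟩⟩⟩ = 0`. -/
theorem homLie_bracket_on_algebra
    {k : Type*} [CommRing k] {A : Type*} [CommRing A] [Algebra k A]
    (σ : A →ₐ[k] A) :
    (∀ a b c : A,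
        (σ (a + b) * c - σ c * (a + b)) =
          (σ a * c - σ c * a) + (σ b * c - σ c * b)) ∧
    (∀ a b c : A,
        (σ a * (b + c) - σ (b + c) * a) =
          (σ a * b - σ b * a) + (σ a * c - σ c * a)) ∧
    (∀ (r : k) (a b : A),
        (σ (r • a) * b - σ b * (r • a)) = r • (σ a * b - σ b * a)) ∧
    (∀ (r : k) (a b : A),
        (σ a * (r • b) - σ (r • b) * a) = r • (σ a * b - σ b * a)) ∧
    (∀ a : A, σ a * a - σ a * a = 0) ∧
    (∀ a b c : A,
        (σ (σ a + a) * (σ b * c - σ c * b) - σ (σ b * c - σ c * b) * (σ a + a)) +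
        (σ (σ b + b) * (σ c * a - σ a * c) - σ (σ c * a - σ a * c) * (σ b + b)) +
        (σ (σ c + c) * (σ a * b - σ b * a) - σ (σ a * b - σ b * a) * (σ c + c)) = 0) := by
  refine ⟨?_, ?_, ?_, ?_, ?_, ?_⟩
  · intro a b c; rw [map_add]; ring
  · intro a b c; rw [map_add]; ring
  · intro r a b; rw [map_smul, Algebra.smul_def, Algebra.smul_def, Algebra.smul_def]; ring
  · intro r a b; rw [map_smul, Algebra.smul_def, Algebra.smul_def, Algebra.smul_def]; ring
  · intro a; exact sub_self _
  · intro a b c; simp only [map_add, map_sub, map_mul]; ring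
end

section
/- Let B be a commutative ring containing a primitive n-th root of unity ξ, b ∈ B, and A = B[t]/(t^n − b) with basis e_i = t^i, 0 ≤ i ≤ n−1. Let σ be the B-algebra automorphism σ(t) = ξt and ε_i := e_i·(id − σ). Then for 0 ≤ i ≤ j ≤ n−1, the hom-Lie bracket satisfies ⟨⟨ε_i, ε_j⟩⟩ = b^{[i+j≥n]}·ξ^i·(1 − ξ^{j−i})·ε_{(i+j) mod n}, where b^{[i+j≥n]} means the factor b is included exactly when i+j ≥ n. -/
open Polynomial

/-- Kummer–Witt hom-Lie bracket.  Let `A = B[t]/(t^n - b)` with basis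
`t^i`, `σ` the `B`-algebra endomorphism with `σ(t) = ξ t` for a primitive `n`-th root
of unity `ξ`, and `ε_i = t^i·(id - σ)`.  Then for `0 ≤ i ≤ j ≤ n-1`,
`⟨⟨ε_i, ε_j⟩⟩ = b^{[i+j≥n]} ξ^i (1 - ξ^{j-i}) ε_{(i+j) mod n}`, where the bracket is
computed via `⟨⟨xΔ, yΔ⟩⟩ = (σ(x)(y - σ y) - σ(y)(x - σ x))·Δ`. -/
theorem kummer_witt_bracket
    {B : Type*} [CommRing B] (n : ℕ) (hn : 0 < n) (ξ b : B)
    (hξ : ξ ^ n = 1)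
    (hprim : ∀ k : ℕ, 0 < k → k < n → ∀ c : B, c * (1 - ξ ^ k) = 0 → c = 0)
    (σ : AdjoinRoot (X ^ n - C b) →ₐ[B] AdjoinRoot (X ^ n - C b))
    (hσ : σ (AdjoinRoot.root (X ^ n - C b)) =
      algebraMap B _ ξ * AdjoinRoot.root (X ^ n - C b)) :
    ∀ i j : ℕ, i ≤ j → j ≤ n - 1 →
      (let t := AdjoinRoot.root (X ^ n - C b)
       σ (t ^ i) * (t ^ j - σ (t ^ j)) - σ (t ^ j) * (t ^ i - σ (t ^ i)) =
        (if n ≤ i + j then algebraMap B _ b else 1) *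
          algebraMap B _ (ξ ^ i * (1 - ξ ^ (j - i))) * t ^ ((i + j) % n)) := by
  intro i j hij hj
  set t := AdjoinRoot.root (X ^ n - C b) with ht
  have htn : t ^ n = algebraMap B _ b := by
    have h := AdjoinRoot.isRoot_root (X ^ n - C b)
    have h2 : aeval t (X ^ n - C b) = 0 := by
      rw [AdjoinRoot.aeval_eq, AdjoinRoot.mk_self]
    rw [map_sub, map_pow, aeval_X, aeval_C] at h2
    linear_combination h2
  have hσp : ∀ k : ℕ, σ (t ^ k) = algebraMap B _ (ξ ^ k) * t ^ k := by
    intro k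
    rw [map_pow, hσ, mul_pow, map_pow]
  simp only [hσp]
  have key : algebraMap B _ (ξ ^ i) * t ^ i * (t ^ j - algebraMap B _ (ξ ^ j) * t ^ j) -
      algebraMap B _ (ξ ^ j) * t ^ j * (t ^ i - algebraMap B _ (ξ ^ i) * t ^ i) =
      algebraMap B _ (ξ ^ i - ξ ^ j) * (t ^ i * t ^ j) := by
    rw [map_sub]; ring
  rw [key]
  have hxij : ξ ^ i - ξ ^ j = ξ ^ i * (1 - ξ ^ (j - i)) := by
    rw [mul_sub, mul_one, ← pow_add, Nat.add_sub_cancel' hij]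
  rw [hxij, ← pow_add]
  by_cases hc : n ≤ i + j
  · rw [if_pos hc]
    have hm : (i + j) % n = i + j - n := by
      rw [Nat.mod_eq_sub_mod hc, Nat.mod_eq_of_lt (by omega)]
    have ht2 : t ^ (i + j) = algebraMap B _ b * t ^ ((i + j) % n) := by
      rw [hm, ← htn, ← pow_add]; congr 1; omega
    rw [ht2]; ring
  · rw [if_neg hc, Nat.mod_eq_of_lt (by omega), one_mul]
end

section
/- Let ξ be a primitive p-th root of unity over a field of characteristic 0 (or any ring where 1 − ξ^k is a unit for 0 < k < p), p > 2 prime, b ≠ 0. The three-dimensional algebra Jac_b(ξ) with basis ε_0, ε_1, ε_{p−1} and brackets ⟨⟨ε_0,ε_1⟩⟩ = (1−ξ)ε_1, ⟨⟨ε_0,ε_{p−1}⟩⟩ = (1−ξ^{p−1})ε_{p−1}, ⟨⟨ε_1,ε_{p−1}⟩⟩ = bξ(1−ξ^{p−2})ε_0 satisfies ⟨⟨Jac_b(ξ), Jac_b(ξ)⟩⟩ = Jac_b(ξ); in particular it is not solvable (the derived series with respect to the bracket does not terminate at 0). -/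
/-- The Jackson bracket on the rank-3 free module with basis `ε_0, ε_1, ε_{p-1}`
(coordinates `u 0, u 1, u 2`), determined by
`⟨⟨ε_0,ε_1⟩⟩ = (1-ξ)ε_1`, `⟨⟨ε_0,ε_{p-1}⟩⟩ = (1-ξ^{p-1})ε_{p-1}`,
`⟨⟨ε_1,ε_{p-1}⟩⟩ = bξ(1-ξ^{p-2})ε_0`, extended alternating-bilinearly. -/
def jacBr (K : Type*) [Field K] (ξ b : K) (p : ℕ) :
    (Fin 3 → K) → (Fin 3 → K) → (Fin 3 → K) := fun u v =>
  ![(u 1 * v 2 - u 2 * v 1) * (b * ξ * (1 - ξ ^ (p - 2))),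
    (u 0 * v 1 - u 1 * v 0) * (1 - ξ),
    (u 0 * v 2 - u 2 * v 0) * (1 - ξ ^ (p - 1))]

/-- The derived series of the bracket. -/
def jacDerived (K : Type*) [Field K]
    (br : (Fin 3 → K) → (Fin 3 → K) → (Fin 3 → K)) : ℕ → Submodule K (Fin 3 → K)
  | 0 => ⊤
  | n + 1 => Submodule.span K
      {x | ∃ u ∈ jacDerived K br n, ∃ v ∈ jacDerived K br n, br u v = x}

/-- for `p > 2` prime, `ξ` a primitive `p`-th root of unity in a field
`K`, and `b ≠ 0`, the algebra `Jac_b(ξ)` satisfies `⟨⟨Jac, Jac⟩⟩ = Jac`; in particular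
its derived series never reaches `0`, so it is not solvable. -/
theorem jac_not_solvable
    (K : Type*) [Field K] (p : ℕ) (hp : p.Prime) (hp2 : 2 < p) (ξ b : K)
    (hξ : ξ ^ p = 1) (hprim : ∀ k : ℕ, 0 < k → k < p → ξ ^ k ≠ 1) (hb : b ≠ 0) :
    Submodule.span K {x | ∃ u v, jacBr K ξ b p u v = x} = ⊤ ∧
    ∀ m : ℕ, jacDerived K (jacBr K ξ b p) m ≠ ⊥ := by
  have hξ0 : ξ ≠ 0 := by
    intro h
    rw [h, zero_pow hp.ne_zero] at hξ
    exact zero_ne_one hξ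
  have h1 : (1 : K) - ξ ≠ 0 := by
    refine sub_ne_zero.mpr fun h => hprim 1 one_pos (by omega) ?_
    simp [← h]
  have h2 : (1 : K) - ξ ^ (p - 1) ≠ 0 :=
    sub_ne_zero.mpr (Ne.symm (hprim (p - 1) (by omega) (by omega)))
  have h3 : b * ξ * (1 - ξ ^ (p - 2)) ≠ 0 :=
    mul_ne_zero (mul_ne_zero hb hξ0)
      (sub_ne_zero.mpr (Ne.symm (hprim (p - 2) (by omega) (by omega))))
  set S := {x | ∃ u v, jacBr K ξ b p u v = x} with hS
  have he0 : (![1, 0, 0] : Fin 3 → K) ∈ Submodule.span K S := by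
    have hm : jacBr K ξ b p ![0, 1, 0] ![0, 0, 1] ∈ Submodule.span K S :=
      Submodule.subset_span ⟨_, _, rfl⟩
    have heq0 : jacBr K ξ b p ![0, 1, 0] ![0, 0, 1] = (b * ξ * (1 - ξ ^ (p - 2))) • (![1, 0, 0] : Fin 3 → K) := by
      funext i
      fin_cases i <;> simp [jacBr]
    have heq : (b * ξ * (1 - ξ ^ (p - 2)))⁻¹ • jacBr K ξ b p ![0, 1, 0] ![0, 0, 1]
        = (![1, 0, 0] : Fin 3 → K) := by
      rw [heq0, inv_smul_smul₀ (by assumption)]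
    rw [← heq]
    exact Submodule.smul_mem _ _ hm
  have he1 : (![0, 1, 0] : Fin 3 → K) ∈ Submodule.span K S := by
    have hm : jacBr K ξ b p ![1, 0, 0] ![0, 1, 0] ∈ Submodule.span K S :=
      Submodule.subset_span ⟨_, _, rfl⟩
    have heq0 : jacBr K ξ b p ![1, 0, 0] ![0, 1, 0] = (1 - ξ) • (![0, 1, 0] : Fin 3 → K) := by
      funext i
      fin_cases i <;> simp [jacBr]
    have heq : (1 - ξ)⁻¹ • jacBr K ξ b p ![1, 0, 0] ![0, 1, 0]
        = (![0, 1, 0] : Fin 3 → K) := by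
      rw [heq0, inv_smul_smul₀ (by assumption)]
    rw [← heq]
    exact Submodule.smul_mem _ _ hm
  have he2 : (![0, 0, 1] : Fin 3 → K) ∈ Submodule.span K S := by
    have hm : jacBr K ξ b p ![1, 0, 0] ![0, 0, 1] ∈ Submodule.span K S :=
      Submodule.subset_span ⟨_, _, rfl⟩
    have heq0 : jacBr K ξ b p ![1, 0, 0] ![0, 0, 1] = (1 - ξ ^ (p - 1)) • (![0, 0, 1] : Fin 3 → K) := by
      funext i
      fin_cases i <;> simp [jacBr]
    have heq : (1 - ξ ^ (p - 1))⁻¹ • jacBr K ξ b p ![1, 0, 0] ![0, 0, 1]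
        = (![0, 0, 1] : Fin 3 → K) := by
      rw [heq0, inv_smul_smul₀ (by assumption)]
    rw [← heq]
    exact Submodule.smul_mem _ _ hm
  have hspan : Submodule.span K S = ⊤ := by
    rw [eq_top_iff]
    intro x _
    have hx : x = x 0 • (![1, 0, 0] : Fin 3 → K) + x 1 • ![0, 1, 0] + x 2 • ![0, 0, 1] := by
      funext i
      fin_cases i <;> simp
    rw [hx]
    exact Submodule.add_mem _ (Submodule.add_mem _ (Submodule.smul_mem _ _ he0)
      (Submodule.smul_mem _ _ he1)) (Submodule.smul_mem _ _ he2)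
  refine ⟨hspan, ?_⟩
  have hall : ∀ m, jacDerived K (jacBr K ξ b p) m = ⊤ := by
    intro m
    induction m with
    | zero => rfl
    | succ n ih =>
      have hset : {x | ∃ u ∈ jacDerived K (jacBr K ξ b p) n,
          ∃ v ∈ jacDerived K (jacBr K ξ b p) n, jacBr K ξ b p u v = x} = S := by
        ext x
        simp [ih, hS]
      show Submodule.span K _ = ⊤
      rw [hset, hspan]
  intro m
  rw [hall m]
  exact fun h => absurd (h ▸ Submodule.mem_top (x := (![1,0,0] : Fin 3 → K)))
    (by simp [Submodule.mem_bot])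
end

section
/- In the algebra J_b(ξ) above (generators x, y, z with relations xy = ξyx, zx = ξxz, zy = ξ²yz + bx + b(1−ξ²)), the following identity holds for all k ≥ 1: z·y^k = ξ^{2k}·y^k·z + b·ξ^{k−1}·(Σ_{i=0}^{k−1} ξ^i)·y^{k−1}·x + b(1−ξ²)·(Σ_{i=0}^{k−1} ξ^{2i})·y^{k−1}. -/
open Finset

/-- in the algebra with generators `x, y, z` and relations
`xy = ξyx`, `zx = ξxz`, `zy = ξ²yz + bx + b(1-ξ²)`, for all `k ≥ 1` one has
`z·y^k = ξ^{2k}·y^k·z + b·ξ^{k-1}·(Σ_{i<k} ξ^i)·y^{k-1}·x + b(1-ξ²)·(Σ_{i<k} ξ^{2i})·y^{k-1}`. -/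
theorem z_mul_y_pow
    {K : Type*} [CommRing K] {R : Type*} [Ring R] [Algebra K R]
    (n : ℕ) (ξ b : K) (hξ : ξ ^ n = 1)
    (x y z : R)
    (hxy : x * y = algebraMap K R ξ * (y * x))
    (hzx : z * x = algebraMap K R ξ * (x * z))
    (hzy : z * y = algebraMap K R (ξ ^ 2) * (y * z) + algebraMap K R b * x +
      algebraMap K R (b * (1 - ξ ^ 2))) :
    ∀ k : ℕ, 1 ≤ k →
      z * y ^ k =
        algebraMap K R (ξ ^ (2 * k)) * (y ^ k * z) +
        algebraMap K R (b * ξ ^ (k - 1) * ∑ i ∈ Finset.range k, ξ ^ i) *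
          (y ^ (k - 1) * x) +
        algebraMap K R (b * (1 - ξ ^ 2) * ∑ i ∈ Finset.range k, ξ ^ (2 * i)) *
          y ^ (k - 1) := by
  suffices h : ∀ m : ℕ,
      z * y ^ (m + 1) =
        algebraMap K R (ξ ^ (2 * (m + 1))) * (y ^ (m + 1) * z) +
        algebraMap K R (b * ξ ^ m * ∑ i ∈ Finset.range (m + 1), ξ ^ i) *
          (y ^ m * x) +
        algebraMap K R (b * (1 - ξ ^ 2) * ∑ i ∈ Finset.range (m + 1), ξ ^ (2 * i)) *
          y ^ m by
    intro k hk
    obtain ⟨m, rfl⟩ := Nat.exists_eq_add_of_le' hk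
    simpa using h m
  intro m
  induction m with
  | zero =>
      simpa [hzy] using hzy
  | succ m ih =>
      have hy : z * y ^ (m + 1 + 1) = (z * y ^ (m + 1)) * y := by
        rw [pow_succ, mul_assoc]
      rw [hy, ih]
      simp only [← Algebra.smul_def] at hzy hxy ⊢
      rw [Algebra.algebraMap_eq_smul_one] at hzy
      rw [add_mul, add_mul, smul_mul_assoc, smul_mul_assoc, smul_mul_assoc,
        mul_assoc (y ^ (m+1)) z y, hzy, mul_assoc (y ^ m) x y, hxy]
      simp only [sum_range_succ, mul_add, smul_add, smul_smul, mul_smul_comm, smul_mul_assoc, mul_one]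
      rw [show y ^ (m+1) * (y * z) = y ^ (m+1+1) * z by rw [← mul_assoc, ← pow_succ],
        show y ^ m * (y * x) = y ^ (m+1) * x by rw [← mul_assoc, ← pow_succ],
        show (y:R) ^ m * y = y ^ (m+1) from (pow_succ y m).symm]
      match_scalars <;> ring
end

section
/- Let B be a commutative ring, σ(y) = y + ν an automorphism of A = B[y]/(y^p − y − b) for p = 3, ν ∈ {1,2} ⊂ F_3 ⊂ B, ε_i := y^i(id − σ). Then the hom-Lie brackets are: ⟨⟨ε_0,ε_1⟩⟩ = −ν·ε_0, ⟨⟨ε_0,ε_2⟩⟩ = −2ν·ε_1 − ν²·ε_0, ⟨⟨ε_1,ε_2⟩⟩ = −ν²·ε_1 − ν·ε_2. -/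
open Polynomial

/-!
Expanding `σ (y ^ i) = (y + ν) ^ i` turns each bracket coefficient of `1, y, y²` into a
polynomial identity in `y` and `ν`.
-/

section ShiftBracket

variable {A F : Type*} [CommRing A] [FunLike F A A] [RingHomClass F A A]

/-- The coefficient of `Δ_σ` in `⟨⟨a Δ_σ, c Δ_σ⟩⟩`, where `Δ_σ = id - σ`. -/
def twistedBracket (σ : F) (a c : A) : A := σ a * (c - σ c) - σ c * (a - σ a)

variable {σ : F} {y ν : A}

theorem twistedBracket_one_self_of_map_eq_add (hσ : σ y = y + ν) :
    twistedBracket σ 1 y = -ν := by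
  simp only [twistedBracket, map_one, hσ]
  ring

theorem twistedBracket_one_sq_of_map_eq_add (hσ : σ y = y + ν) :
    twistedBracket σ 1 (y ^ 2) = -(2 * ν) * y - ν ^ 2 := by
  simp only [twistedBracket, map_one, map_pow, hσ]
  ring

theorem twistedBracket_self_sq_of_map_eq_add (hσ : σ y = y + ν) :
    twistedBracket σ y (y ^ 2) = -ν ^ 2 * y - ν * y ^ 2 := by
  simp only [twistedBracket, map_pow, hσ]
  ring

end ShiftBracket

theorem artin_schreier_p3_brackets_general
    {B : Type*} [CommRing B] (b ν : B)
    (σ : AdjoinRoot (X ^ 3 - X - C b) →ₐ[B] AdjoinRoot (X ^ 3 - X - C b))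
    (hσ : σ (AdjoinRoot.root (X ^ 3 - X - C b)) =
      AdjoinRoot.root (X ^ 3 - X - C b) + algebraMap B _ ν) :
    (let y := AdjoinRoot.root (X ^ 3 - X - C b)
     let ν' := algebraMap B (AdjoinRoot (X ^ 3 - X - C b)) ν
     (σ (y ^ 0) * (y ^ 1 - σ (y ^ 1)) - σ (y ^ 1) * (y ^ 0 - σ (y ^ 0)) = -ν') ∧
     (σ (y ^ 0) * (y ^ 2 - σ (y ^ 2)) - σ (y ^ 2) * (y ^ 0 - σ (y ^ 0)) =
        -(2 * ν') * y - ν' ^ 2) ∧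
     (σ (y ^ 1) * (y ^ 2 - σ (y ^ 2)) - σ (y ^ 2) * (y ^ 1 - σ (y ^ 1)) =
        -ν' ^ 2 * y - ν' * y ^ 2)) := by
  intro y ν'
  simp only [pow_zero, pow_one]
  exact ⟨twistedBracket_one_self_of_map_eq_add hσ, twistedBracket_one_sq_of_map_eq_add hσ,
    twistedBracket_self_sq_of_map_eq_add hσ⟩

/-- Artin–Schreier hom-Lie algebra for `p = 3`.  With
`A = B[y]/(y³ - y - b)` over an `𝔽₃`-algebra `B`, `σ(y) = y + ν` (`ν ∈ {1,2}`),
`Δ = id - σ` and `ε_i = y^i·Δ`, the brackets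
`⟨⟨ε_i,ε_j⟩⟩ = (σ(y^i)Δ(y^j) - σ(y^j)Δ(y^i))·Δ` are
`⟨⟨ε_0,ε_1⟩⟩ = -ν ε_0`, `⟨⟨ε_0,ε_2⟩⟩ = -2ν ε_1 - ν² ε_0`,
`⟨⟨ε_1,ε_2⟩⟩ = -ν² ε_1 - ν ε_2`. -/
theorem artin_schreier_p3_brackets
    {B : Type*} [CommRing B] [Algebra (ZMod 3) B] (b ν : B)
    (hν : ν = 1 ∨ ν = 2)
    (σ : AdjoinRoot (X ^ 3 - X - C b) →ₐ[B] AdjoinRoot (X ^ 3 - X - C b))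
    (hσ : σ (AdjoinRoot.root (X ^ 3 - X - C b)) =
      AdjoinRoot.root (X ^ 3 - X - C b) + algebraMap B _ ν) :
    (let y := AdjoinRoot.root (X ^ 3 - X - C b)
     let ν' := algebraMap B (AdjoinRoot (X ^ 3 - X - C b)) ν
     (σ (y ^ 0) * (y ^ 1 - σ (y ^ 1)) - σ (y ^ 1) * (y ^ 0 - σ (y ^ 0)) = -ν') ∧
     (σ (y ^ 0) * (y ^ 2 - σ (y ^ 2)) - σ (y ^ 2) * (y ^ 0 - σ (y ^ 0)) =
        -(2 * ν') * y - ν' ^ 2) ∧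
     (σ (y ^ 1) * (y ^ 2 - σ (y ^ 2)) - σ (y ^ 2) * (y ^ 1 - σ (y ^ 1)) =
        -ν' ^ 2 * y - ν' * y ^ 2)) :=
  artin_schreier_p3_brackets_general b ν σ hσ
end
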